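/- Let n, s ∈ ℤ with s ≥ 2 and 4s ≤ n + 1. Then q_{n,s}(v − v_{n,s}) = 3s/2 for every v ∈ S(n,s), and q_{n,s}(u − v_{n,s}) > 3s/2 for every u ∈ V²_{n,s} \ S(n,s). That is, P(n,s) is a Delaunay polytope of V²_{n,s} with respect to q_{n,s}, with center of the circumscribed ellipsoid v_{n,s} and squared radius 3s/2. -/

import Mathlib

open Finset

noncomputable section

/-- The lattice `A_n = {x ∈ ℤ^{n+1} : Σ x_i = 0}`, viewed inside `ℝ^{n+1}`. -/
def latticeA (n : ℕ) : Set (Fin (n+1) → ℝ) :=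
  {x | (∀ i, ∃ m : ℤ, x i = m) ∧ ∑ i, x i = 0}

/-- The point lattice `V_{n,s} = {x ∈ ℤ^{n+1} : Σ x_i = s}`. -/
def Vset (n s : ℕ) : Set (Fin (n+1) → ℝ) :=
  {x | (∀ i, ∃ m : ℤ, x i = m) ∧ ∑ i, x i = (s : ℝ)}

/-- The vertex set `W(n+1,s) = {x ∈ {0,1}^{n+1} : Σ x_i = s}`. -/
def Wset (n s : ℕ) : Set (Fin (n+1) → ℝ) :=
  {x | (∀ i, x i = 0 ∨ x i = 1) ∧ ∑ i, x i = (s : ℝ)}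

/-- The vector `v_{n,s} = ((1/4)^{4s}; 0^{n+1-4s})`. -/
def vns (n s : ℕ) : Fin (n+1) → ℝ := fun i => if (i : ℕ) < 4 * s then 1 / 4 else 0

/-- The vector `t_{n,s} = ((1/2)^{2s}; (−1/2)^{2s}; 0^{n+1-4s})`. -/
def tns (n s : ℕ) : Fin (n+1) → ℝ := fun i =>
  if (i : ℕ) < 2 * s then 1 / 2 else if (i : ℕ) < 4 * s then -(1 / 2) else 0

/-- The point lattice `V²_{n,s} = V_{n,s} ∪ (t_{n,s} + V_{n,s})`. -/
def V2 (n s : ℕ) : Set (Fin (n+1) → ℝ) :=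
  Vset n s ∪ (fun x => tns n s + x) '' Vset n s

/-- The vertex set `S(n,s) = W(n+1,s) ∪ {2v_{n,s} − v : v ∈ W(n+1,s)}`
of the polytope `P(n,s)`. -/
def Sns (n s : ℕ) : Set (Fin (n+1) → ℝ) :=
  Wset n s ∪ (fun v => (2 : ℝ) • vns n s - v) '' Wset n s

/-- The quadratic form `q_{n,s}(x) = 2 Σ_{i<4s} x_i² + Σ_{i≥4s} x_i²`. -/
def qns (n s : ℕ) (x : Fin (n+1) → ℝ) : ℝ :=
  ∑ i : Fin (n+1), (if (i : ℕ) < 4 * s then (2:ℝ) else 1) * (x i) ^ 2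

/-!
The reflection `x ↦ 2v_{n,s} − x` through the centre maps `V_{n,s}` onto `t_{n,s} + V_{n,s}`,
because `2v_{n,s} − t_{n,s}` is the 0/1 vector supported on `[2s, 4s)`, of coordinate sum `2s`;
and `q_{n,s}` is even.
So it suffices to treat `x ∈ V_{n,s}`, where expanding the squares gives
`q_{n,s}(x − v_{n,s}) = 3s/2 + Σ c_i x_i (x_i − 1)` with weights `c_i ∈ {1, 2}`.
For integers `x_i (x_i − 1) ≥ 0`, with equality exactly when `x_i ∈ {0, 1}`.
-/

lemma sum_ite_val_lt {m k : ℕ} (h : k ≤ m) (c : ℝ) :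
    ∑ i : Fin m, (if (i : ℕ) < k then c else 0) = k * c := by
  rw [← sum_filter, sum_const, Fin.card_filter_val_lt, min_eq_right h, nsmul_eq_mul]

lemma intCast_mul_sub_one_nonneg (m : ℤ) : 0 ≤ (m : ℝ) * (m - 1) := by
  have : 0 ≤ m * (m - 1) := by nlinarith [Int.le_self_sq m]
  exact_mod_cast this

lemma qns_neg (n s : ℕ) (x : Fin (n+1) → ℝ) : qns n s (-x) = qns n s x := by
  simp only [qns, Pi.neg_apply, neg_sq]

lemma qns_two_smul_sub_sub (n s : ℕ) (c y : Fin (n+1) → ℝ) :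
    qns n s ((2 : ℝ) • c - y - c) = qns n s (y - c) := by
  rw [← qns_neg, show -((2 : ℝ) • c - y - c) = y - c by module]

lemma Wset_subset_Vset (n s : ℕ) : Wset n s ⊆ Vset n s := by
  rintro x ⟨hx01, hxsum⟩
  refine ⟨fun i => ?_, hxsum⟩
  rcases hx01 i with h | h
  · exact ⟨0, by simp [h]⟩
  · exact ⟨1, by simp [h]⟩

lemma two_smul_vns_sub_tns_add_mem_Vset {n s : ℕ} (h4s : 4 * s ≤ n + 1)
    {x : Fin (n+1) → ℝ} (hx : x ∈ Vset n s) : (2 : ℝ) • vns n s - (tns n s + x) ∈ Vset n s := by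
  obtain ⟨hxint, hxsum⟩ := hx
  have hcoord : ∀ i : Fin (n+1), ((2 : ℝ) • vns n s - (tns n s + x)) i =
      (if (i : ℕ) < 4 * s then 1 else 0) - (if (i : ℕ) < 2 * s then 1 else 0) - x i := by
    intro i
    simp only [Pi.sub_apply, Pi.add_apply, Pi.smul_apply, vns, tns]
    split_ifs <;> first | omega | ring
  refine ⟨fun i => ?_, ?_⟩
  · obtain ⟨m, hm⟩ := hxint i
    refine ⟨(if (i : ℕ) < 4 * s then 1 else 0) - (if (i : ℕ) < 2 * s then 1 else 0) - m, ?_⟩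
    rw [hcoord, hm]
    push_cast
    rfl
  · simp only [hcoord, sum_sub_distrib, hxsum, sum_ite_val_lt h4s,
      sum_ite_val_lt (by omega : 2 * s ≤ n + 1)]
    push_cast
    ring

def qnsExcess (n s : ℕ) (x : Fin (n+1) → ℝ) : ℝ :=
  ∑ i : Fin (n+1), (if (i : ℕ) < 4 * s then (2 : ℝ) else 1) * (x i * (x i - 1))

lemma qns_sub_vns {n s : ℕ} (h4s : 4 * s ≤ n + 1) {x : Fin (n+1) → ℝ}
    (hxsum : ∑ i, x i = s) : qns n s (x - vns n s) = 3 * s / 2 + qnsExcess n s x := by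
  have hterm : ∀ i : Fin (n+1),
      (if (i : ℕ) < 4 * s then (2 : ℝ) else 1) * (x - vns n s) i ^ 2 =
        x i + (if (i : ℕ) < 4 * s then 1 / 8 else 0) +
          (if (i : ℕ) < 4 * s then (2 : ℝ) else 1) * (x i * (x i - 1)) := by
    intro i
    simp only [Pi.sub_apply, vns]
    split_ifs <;> ring
  simp only [qns, qnsExcess, hterm, sum_add_distrib, hxsum, sum_ite_val_lt h4s]
  push_cast
  ring

lemma qnsExcess_term_nonneg (n s : ℕ) {x : Fin (n+1) → ℝ} (hx : x ∈ Vset n s)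
    (i : Fin (n+1)) : 0 ≤ (if (i : ℕ) < 4 * s then (2 : ℝ) else 1) * (x i * (x i - 1)) := by
  obtain ⟨m, hm⟩ := hx.1 i
  exact mul_nonneg (by split_ifs <;> norm_num) (hm ▸ intCast_mul_sub_one_nonneg m)

lemma qnsExcess_nonneg (n s : ℕ) {x : Fin (n+1) → ℝ} (hx : x ∈ Vset n s) :
    0 ≤ qnsExcess n s x :=
  sum_nonneg fun i _ => qnsExcess_term_nonneg n s hx i

lemma qnsExcess_eq_zero_iff (n s : ℕ) {x : Fin (n+1) → ℝ} (hx : x ∈ Vset n s) :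
    qnsExcess n s x = 0 ↔ ∀ i, x i = 0 ∨ x i = 1 := by
  rw [qnsExcess, sum_eq_zero_iff_of_nonneg fun i _ => qnsExcess_term_nonneg n s hx i]
  refine forall_congr' fun i => ?_
  have hc : (if (i : ℕ) < 4 * s then (2 : ℝ) else 1) ≠ 0 := by split_ifs <;> norm_num
  rw [mul_eq_zero, or_iff_right hc, mul_eq_zero, sub_eq_zero]
  exact ⟨fun h => h (mem_univ i), fun h _ => h⟩

lemma qns_sub_vns_of_mem_Wset {n s : ℕ} (h4s : 4 * s ≤ n + 1) {x : Fin (n+1) → ℝ}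
    (hx : x ∈ Wset n s) : qns n s (x - vns n s) = 3 * s / 2 := by
  rw [qns_sub_vns h4s hx.2, (qnsExcess_eq_zero_iff n s (Wset_subset_Vset n s hx)).2 hx.1,
    add_zero]

lemma lt_qns_sub_vns_of_mem_Vset {n s : ℕ} (h4s : 4 * s ≤ n + 1) {x : Fin (n+1) → ℝ}
    (hx : x ∈ Vset n s) (hxW : x ∉ Wset n s) : 3 * s / 2 < qns n s (x - vns n s) := by
  have hne : qnsExcess n s x ≠ 0 :=
    fun h => hxW ⟨(qnsExcess_eq_zero_iff n s hx).1 h, hx.2⟩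
  rw [qns_sub_vns h4s hx.2]
  linarith [lt_of_le_of_ne (qnsExcess_nonneg n s hx) hne.symm]

theorem Pns_delaunay_in_V2_general (n s : ℕ) (h4s : 4 * s ≤ n + 1) :
    (∀ v ∈ Sns n s, qns n s (v - vns n s) = 3 * (s : ℝ) / 2) ∧
    (∀ u ∈ V2 n s \ Sns n s, 3 * (s : ℝ) / 2 < qns n s (u - vns n s)) := by
  refine ⟨?_, ?_⟩
  · rintro v (hv | ⟨w, hw, rfl⟩)
    · exact qns_sub_vns_of_mem_Wset h4s hv
    · dsimp only
      rw [qns_two_smul_sub_sub]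
      exact qns_sub_vns_of_mem_Wset h4s hw
  · rintro u ⟨hu | ⟨x, hx, rfl⟩, huS⟩
    · exact lt_qns_sub_vns_of_mem_Vset h4s hu fun h => huS (Or.inl h)
    · set y := (2 : ℝ) • vns n s - (tns n s + x)
      have hu : tns n s + x = (2 : ℝ) • vns n s - y := (sub_sub_cancel _ _).symm
      have hyW : y ∉ Wset n s := fun h => huS (Or.inr ⟨y, h, hu.symm⟩)
      dsimp only
      rw [hu, qns_two_smul_sub_sub]
      exact lt_qns_sub_vns_of_mem_Vset h4s (two_smul_vns_sub_tns_add_mem_Vset h4s hx) hyW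

/-- `P(n,s)` is a Delaunay polytope of `V²_{n,s}` with respect to `q_{n,s}`,
with center of the circumscribed ellipsoid `v_{n,s}` and squared radius `3s/2`. -/
theorem Pns_delaunay_in_V2 (n s : ℕ) (hs : 2 ≤ s) (h4s : 4 * s ≤ n + 1) :
    (∀ v ∈ Sns n s, qns n s (v - vns n s) = 3 * (s : ℝ) / 2) ∧
    (∀ u ∈ V2 n s \ Sns n s, 3 * (s : ℝ) / 2 < qns n s (u - vns n s)) :=
  Pns_delaunay_in_V2_general n s h4s
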